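/- For every s ∈ ℂ with s ≠ 0 and s ≠ 1, π^{−s/2} Γ(s/2) ζ(s) = −1/s − 1/(1−s) + π^{−s/2} ∑_{n=1}^∞ n^{−s} Γ(s/2, πn²) + π^{(s−1)/2} ∑_{n=1}^∞ n^{s−1} Γ((1−s)/2, πn²), where the left-hand side is interpreted as the completed Riemann zeta function (i.e. the entire-except-poles-at-0,1 continuation of π^{−s/2}Γ(s/2)ζ(s)). -/

import Mathlib

open MeasureTheory

/-- The upper incomplete gamma function `Γ(z,w) = ∫_w^∞ e^{−x} x^{z−1} dx` for real `w > 0`. -/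
noncomputable def incGamma (z : ℂ) (w : ℝ) : ℂ :=
  ∫ x in Set.Ioi w, (Real.exp (-x) : ℂ) * (x:ℂ) ^ (z - 1)

namespace CompletedZetaAux

open MeasureTheory Set Real Complex Filter HurwitzZeta

lemma integral_exp_cpow (w : ℂ) {b : ℝ} (hb : 0 < b) :
    ∫ x in Ioi (1:ℝ), (x:ℂ) ^ (w-1) * rexp (-(b*x)) = (b:ℂ) ^ (-w) * incGamma w b := by
  have hb' : (b:ℂ) ≠ 0 := ofReal_ne_zero.mpr hb.ne'
  have hbp : (b:ℂ) ^ (w-1) ≠ 0 := by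
    simp [Complex.cpow_def_of_ne_zero hb', Complex.exp_ne_zero]
  have h := integral_comp_mul_left_Ioi (fun y : ℝ ↦ (rexp (-y) : ℂ) * (y:ℂ) ^ (w-1)) 1 hb
  rw [mul_one] at h
  have h2 : ∫ x in Ioi (1:ℝ), (rexp (-(b*x)) : ℂ) * ((b*x : ℝ):ℂ) ^ (w-1)
      = (b:ℂ)^(w-1) * ∫ x in Ioi (1:ℝ), (x:ℂ) ^ (w-1) * rexp (-(b*x)) := by
    rw [← integral_const_mul]
    refine setIntegral_congr_fun measurableSet_Ioi fun x hx ↦ ?_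
    have hx0 : (0:ℝ) ≤ x := by have := mem_Ioi.mp hx; linarith
    rw [ofReal_mul, Complex.mul_cpow_ofReal_nonneg hb.le hx0]
    ring
  rw [h2, real_smul, ofReal_inv] at h
  apply mul_left_cancel₀ hbp
  rw [h, ← incGamma, ← mul_assoc, ← cpow_add _ _ hb']
  ring_nf
  rw [Complex.cpow_neg_one]; ring

lemma integrableOn_term (w : ℂ) {b : ℝ} (hb : 0 < b) :
    IntegrableOn (fun x : ℝ ↦ (x:ℂ) ^ (w-1) * rexp (-(b*x))) (Ioi 1) := by
  have hσ : -1 < max (w.re - 1) 0 := lt_of_lt_of_le neg_one_lt_zero (le_max_right _ _)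
  have hdom : IntegrableOn (fun x : ℝ ↦ x ^ max (w.re - 1) 0 * rexp (-(b * x))) (Ioi 1) := by
    have := integrableOn_rpow_mul_exp_neg_mul_rpow hσ zero_lt_one hb
    simp_rw [rpow_one, neg_mul] at this
    exact this.mono_set (Ioi_subset_Ioi zero_le_one)
  refine Integrable.mono' hdom ?_ ?_
  · refine (ContinuousOn.aestronglyMeasurable ?_ measurableSet_Ioi)
    intro x hx
    have hx0 : x ≠ 0 := (lt_trans zero_lt_one hx).ne'
    refine ContinuousWithinAt.mul
      (Complex.continuousAt_ofReal_cpow_const x _ (Or.inr hx0)).continuousWithinAt ?_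
    exact (Complex.continuous_ofReal.comp (Real.continuous_exp.comp (by fun_prop))).continuousWithinAt
  · filter_upwards [ae_restrict_mem measurableSet_Ioi] with x hx
    have hx1 : (1:ℝ) ≤ x := le_of_lt hx
    have hx0 : 0 < x := lt_of_lt_of_le zero_lt_one hx1
    rw [norm_mul, norm_cpow_eq_rpow_re_of_pos hx0, Complex.norm_real,
      Real.norm_of_nonneg (Real.exp_nonneg _)]
    gcongr
    · rw [Complex.sub_re, Complex.one_re]; exact le_max_left _ _

lemma hasSum_theta {t : ℝ} (ht : 0 < t) :
    HasSum (fun n : ℕ ↦ 2 * rexp (-(π * ((n:ℝ)+1)^2 * t))) (evenKernel 0 t - 1) := by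
  have h := hasSum_nat_cosKernel₀ (0:ℝ) ht
  rw [QuotientAddGroup.mk_zero, ← evenKernel_eq_cosKernel_of_zero] at h
  refine h.congr_fun fun n ↦ ?_
  simp [neg_mul]

lemma summable_exp_neg_pi_sq : Summable (fun n : ℕ ↦ rexp (-(π * ((n:ℝ)+1)^2))) := by
  have hg : Summable (fun n : ℕ ↦ rexp (-1) * rexp (-1) ^ n) :=
    (summable_geometric_of_lt_one (Real.exp_pos (-1)).le
      (Real.exp_lt_one_iff.mpr (by norm_num))).mul_left (rexp (-1))
  refine Summable.of_nonneg_of_le (fun n ↦ (Real.exp_pos _).le) (fun n ↦ ?_) hg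
  rw [← Real.exp_nat_mul, ← Real.exp_add]
  apply Real.exp_le_exp.mpr
  have h1 : ((n:ℝ)+1) ≤ ((n:ℝ)+1)^2 := by nlinarith [Nat.cast_nonneg (α := ℝ) n]
  have h2 : ((n:ℝ)+1) ≤ π * ((n:ℝ)+1)^2 := by
    calc ((n:ℝ)+1) ≤ ((n:ℝ)+1)^2 := h1
    _ ≤ π * ((n:ℝ)+1)^2 := le_mul_of_one_le_left (by positivity) (by linarith [Real.pi_gt_three])
  linarith

lemma I_eq (w : ℂ) :
    ∫ x in Ioi (1:ℝ), (x:ℂ)^(w-1) * (((evenKernel 0 x : ℝ):ℂ) - 1) =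
      2 * ∑' n : ℕ, ((π * ((n:ℝ)+1)^2 : ℝ):ℂ)^(-w) * incGamma w (π * ((n:ℝ)+1)^2) := by
  set b : ℕ → ℝ := fun n ↦ π * ((n:ℝ)+1)^2 with hbdef
  have hb : ∀ n, 0 < b n := fun n ↦ by positivity
  have hbπ : ∀ n, π ≤ b n := fun n ↦ by
    have h1 : (1:ℝ) ≤ ((n:ℝ)+1)^2 := by nlinarith [Nat.cast_nonneg (α := ℝ) n]
    exact le_mul_of_one_le_right Real.pi_pos.le h1
  set F : ℕ → ℝ → ℂ := fun n x ↦ (x:ℂ)^(w-1) * (2 * rexp (-(b n * x))) with hFdef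
  have hInt : ∀ n, Integrable (F n) (volume.restrict (Ioi 1)) := by
    intro n
    have h2 := ((integrableOn_term w (hb n)).const_mul (2:ℂ))
    exact IntegrableOn.congr_fun h2 (fun x _ ↦ by simp only [hFdef]; ring) measurableSet_Ioi
  set sp := max (w.re - 1) 0 with hspdef
  have hσ : -1 < sp := lt_of_lt_of_le neg_one_lt_zero (le_max_right _ _)
  have hK : IntegrableOn (fun x : ℝ ↦ x ^ sp * rexp (-(π * x))) (Ioi 1) := by
    have := integrableOn_rpow_mul_exp_neg_mul_rpow hσ zero_lt_one Real.pi_pos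
    simp_rw [rpow_one, neg_mul] at this
    exact this.mono_set (Ioi_subset_Ioi zero_le_one)
  set K : ℝ := ∫ x in Ioi (1:ℝ), x ^ sp * rexp (-(π * x)) with hKdef
  have hbound : ∀ n, (∫ x in Ioi (1:ℝ), ‖F n x‖) ≤ 2 * rexp (π - b n) * K := by
    intro n
    have hmono : ∀ x ∈ Ioi (1:ℝ), ‖F n x‖ ≤ 2 * rexp (π - b n) * (x ^ sp * rexp (-(π * x))) := by
      intro x hx
      have hx1 : (1:ℝ) ≤ x := le_of_lt hx
      have hx0 : 0 < x := lt_of_lt_of_le zero_lt_one hx1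
      rw [hFdef, norm_mul, norm_mul, norm_cpow_eq_rpow_re_of_pos hx0, Complex.norm_real,
        Real.norm_of_nonneg (Real.exp_nonneg _), Complex.norm_ofNat]
      have h1 : x ^ (w-1).re ≤ x ^ sp :=
        Real.rpow_le_rpow_of_exponent_le hx1 (by rw [Complex.sub_re, Complex.one_re]; exact le_max_left _ _)
      have h2 : rexp (-(b n * x)) ≤ rexp (π - b n) * rexp (-(π * x)) := by
        rw [← Real.exp_add]
        apply Real.exp_le_exp.mpr
        nlinarith [hbπ n, hx1]
      calc x ^ (w-1).re * (2 * rexp (-(b n * x)))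
          ≤ x ^ sp * (2 * (rexp (π - b n) * rexp (-(π * x)))) := by
            apply mul_le_mul h1 (by nlinarith [Real.exp_nonneg (-(b n * x))]) (by positivity)
              (by positivity)
        _ = 2 * rexp (π - b n) * (x ^ sp * rexp (-(π * x))) := by ring
    calc (∫ x in Ioi (1:ℝ), ‖F n x‖)
        ≤ ∫ x in Ioi (1:ℝ), 2 * rexp (π - b n) * (x ^ sp * rexp (-(π * x))) := by
          refine setIntegral_mono_on (hInt n).norm (hK.const_mul _) measurableSet_Ioi hmono
      _ = 2 * rexp (π - b n) * K := by rw [integral_const_mul]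
  have hSum : Summable (fun n ↦ ∫ x in Ioi (1:ℝ), ‖F n x‖) := by
    refine Summable.of_nonneg_of_le
      (fun n ↦ integral_nonneg (fun x ↦ norm_nonneg _)) hbound ?_
    have : Summable (fun n : ℕ ↦ rexp (π - b n)) := by
      simp_rw [Real.exp_sub]
      exact (summable_exp_neg_pi_sq.congr (fun n ↦ by rw [Real.exp_neg])).mul_left _
    simpa [mul_assoc, mul_comm, mul_left_comm] using (this.mul_left 2).mul_right K
  have hexch := integral_tsum_of_summable_integral_norm hInt hSum
  have hgoal1 : ∫ x in Ioi (1:ℝ), (x:ℂ)^(w-1) * (((evenKernel 0 x : ℝ):ℂ) - 1)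
      = ∫ x in Ioi (1:ℝ), ∑' n, F n x := by
    refine setIntegral_congr_fun measurableSet_Ioi (fun x hx ↦ ?_)
    have hx0 : 0 < x := lt_trans zero_lt_one hx
    have hs := (Complex.hasSum_ofReal.mpr (hasSum_theta hx0)).mul_left ((x:ℂ)^(w-1))
    rw [show (((evenKernel 0 x : ℝ):ℂ) - 1) = ((evenKernel 0 x - 1 : ℝ):ℂ) by push_cast; ring,
      ← hs.tsum_eq]
    refine tsum_congr fun n ↦ ?_
    simp only [hFdef, hbdef]
    push_cast
    ring
  rw [hgoal1, ← hexch]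
  have hterm : ∀ n, (∫ x in Ioi (1:ℝ), F n x)
      = 2 * (((b n : ℝ):ℂ)^(-w) * incGamma w (b n)) := by
    intro n
    rw [← integral_exp_cpow w (hb n), ← integral_const_mul]
    refine setIntegral_congr_fun measurableSet_Ioi (fun x _ ↦ ?_)
    rw [hFdef]; push_cast; ring
  simp_rw [hterm]
  rw [tsum_mul_left]

lemma Lambda0_eq (w : ℂ) :
    (hurwitzEvenFEPair 0).Λ₀ w =
      (∫ x in Ioi (1:ℝ), (x:ℂ)^(w-1) * (((evenKernel 0 x:ℝ):ℂ) - 1)) +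
      ∫ x in Ioi (1:ℝ), (x:ℂ)^((1/2 - w)-1) * (((evenKernel 0 x:ℝ):ℂ) - 1) := by
  set G₁ : ℝ → ℂ := (Ioi (1:ℝ)).indicator (fun x : ℝ ↦ ((evenKernel 0 x : ℝ):ℂ) - 1) with hG₁
  set G₂ : ℝ → ℂ :=
    (Ioo (0:ℝ) 1).indicator (fun x : ℝ ↦ ((evenKernel 0 x : ℝ):ℂ) - ((x ^ (-(1/2):ℝ) : ℝ):ℂ))
    with hG₂
  have hfm : (hurwitzEvenFEPair 0).f_modif = fun x ↦ G₁ x + G₂ x := by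
    funext x
    simp only [WeakFEPair.f_modif, hurwitzEvenFEPair, Pi.add_apply, Function.comp_apply,
      if_pos rfl, if_true, one_mul, smul_eq_mul, mul_one, hG₁, hG₂]
  have hM : IntegrableOn (fun x : ℝ ↦ (x:ℂ)^(w-1) • (hurwitzEvenFEPair 0).f_modif x) (Ioi 0) :=
    ((hurwitzEvenFEPair 0).isStrongFEPair_toStrongFEPair.hasMellin w).1
  rw [hfm] at hM
  have hp1 : (fun x : ℝ ↦ (x:ℂ)^(w-1) • G₁ x)
      = (Ioi (1:ℝ)).indicator (fun x : ℝ ↦ (x:ℂ)^(w-1) • (G₁ x + G₂ x)) := by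
    funext x
    by_cases hx : x ∈ Ioi (1:ℝ)
    · have hx2 : x ∉ Ioo (0:ℝ) 1 := fun h ↦ absurd h.2 (not_lt.mpr (le_of_lt hx))
      rw [indicator_of_mem hx, hG₂, indicator_of_notMem hx2, add_zero]
    · rw [indicator_of_notMem hx, hG₁, indicator_of_notMem hx, smul_zero]
  have hp2 : (fun x : ℝ ↦ (x:ℂ)^(w-1) • G₂ x)
      = (Ioo (0:ℝ) 1).indicator (fun x : ℝ ↦ (x:ℂ)^(w-1) • (G₁ x + G₂ x)) := by
    funext x
    by_cases hx : x ∈ Ioo (0:ℝ) 1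
    · have hx2 : x ∉ Ioi (1:ℝ) := fun h ↦ absurd hx.2 (not_lt.mpr (le_of_lt h))
      rw [indicator_of_mem hx, hG₁, indicator_of_notMem hx2, zero_add]
    · rw [indicator_of_notMem hx, hG₂, indicator_of_notMem hx, smul_zero]
  have hM1 : IntegrableOn (fun x : ℝ ↦ (x:ℂ)^(w-1) • G₁ x) (Ioi 0) := by
    rw [hp1]; exact hM.indicator measurableSet_Ioi
  have hM2 : IntegrableOn (fun x : ℝ ↦ (x:ℂ)^(w-1) • G₂ x) (Ioi 0) := by
    rw [hp2]; exact hM.indicator measurableSet_Ioo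
  have hsplit : (hurwitzEvenFEPair 0).Λ₀ w =
      (∫ x in Ioi (0:ℝ), (x:ℂ)^(w-1) • G₁ x) + ∫ x in Ioi (0:ℝ), (x:ℂ)^(w-1) • G₂ x := by
    rw [← integral_add hM1 hM2]
    show mellin _ w = _
    rw [hfm, mellin]
    congr 1
    funext x
    rw [smul_add]
  rw [hsplit]
  congr 1
  · -- first piece
    rw [hp1, setIntegral_indicator measurableSet_Ioi,
      show Ioi (0:ℝ) ∩ Ioi 1 = Ioi 1 by rw [Set.Ioi_inter_Ioi]; norm_num]
    refine setIntegral_congr_fun measurableSet_Ioi (fun x hx ↦ ?_)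
    have hx2 : x ∉ Ioo (0:ℝ) 1 := fun h ↦ absurd h.2 (not_lt.mpr (le_of_lt hx))
    rw [hG₁, indicator_of_mem hx, hG₂, indicator_of_notMem hx2, add_zero, smul_eq_mul]
  · -- second piece
    have hGinv : mellin G₂ w = mellin (fun t ↦ G₂ t⁻¹) (-w) := by
      rw [← mellin_comp_inv (fun t ↦ G₂ t⁻¹) w]
      simp only [mellin]
      exact setIntegral_congr_fun measurableSet_Ioi (fun t ht ↦ by rw [inv_inv])
    rw [show (∫ x in Ioi (0:ℝ), (x:ℂ)^(w-1) • G₂ x) = mellin G₂ w from rfl, hGinv,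
      show mellin (fun t ↦ G₂ t⁻¹) (-w) = ∫ t in Ioi (0:ℝ), (t:ℂ)^(-w-1) • G₂ t⁻¹ from rfl]
    have hptw : ∀ t ∈ Ioi (0:ℝ), (t:ℂ)^(-w-1) • G₂ t⁻¹
        = (Ioi (1:ℝ)).indicator (fun t : ℝ ↦ (t:ℂ)^((1/2-w)-1) * (((evenKernel 0 t:ℝ):ℂ) - 1)) t := by
      intro t ht
      have ht0 : (0:ℝ) < t := ht
      by_cases ht1 : 1 < t
      · have hmem : t⁻¹ ∈ Ioo (0:ℝ) 1 := ⟨inv_pos.mpr ht0, inv_lt_one_of_one_lt₀ ht1⟩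
        rw [hG₂, indicator_of_mem hmem, indicator_of_mem (show t ∈ Ioi 1 from ht1)]
        have hker : evenKernel 0 t⁻¹ = t ^ ((1:ℝ)/2) * evenKernel 0 t := by
          have h := evenKernel_functional_equation 0 t⁻¹
          rw [h, ← evenKernel_eq_cosKernel_of_zero, Real.inv_rpow ht0.le]
          simp [one_div]
        have hpw : (t⁻¹) ^ (-(1/2):ℝ) = t ^ ((1:ℝ)/2) := by
          rw [Real.inv_rpow ht0.le, ← Real.rpow_neg ht0.le]
          norm_num
        have hne : (t:ℂ) ≠ 0 := ofReal_ne_zero.mpr ht0.ne'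
        have hsplitpow : ((t:ℂ))^((1/2 : ℂ) - w - 1) = (t:ℂ)^(-w-1) * (t:ℂ)^((((1:ℝ)/2 : ℝ)):ℂ) := by
          rw [show (1/2:ℂ) - w - 1 = (-w-1) + ((((1:ℝ)/2 : ℝ)):ℂ) by push_cast; ring,
            cpow_add _ _ hne]
        rw [hker, hpw, smul_eq_mul, ofReal_mul, ofReal_cpow ht0.le, hsplitpow]
        ring
      · have hmem : t⁻¹ ∉ Ioo (0:ℝ) 1 := by
          rintro ⟨h1, h2⟩
          have ht1' : t ≤ 1 := not_lt.mp ht1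
          nlinarith [mul_inv_cancel₀ ht0.ne']
        rw [hG₂, indicator_of_notMem hmem, smul_zero,
          indicator_of_notMem (show t ∉ Ioi 1 from ht1)]
    rw [setIntegral_congr_fun measurableSet_Ioi hptw,
      setIntegral_indicator measurableSet_Ioi,
      show Ioi (0:ℝ) ∩ Ioi 1 = Ioi 1 by rw [Set.Ioi_inter_Ioi]; norm_num]

lemma cpow_pi_mul_sq (c : ℂ) (n : ℕ) :
    ((π * ((n:ℝ)+1)^2 : ℝ):ℂ)^c = (π:ℂ)^c * ((n:ℂ)+1)^(2*c) := by
  have hn : (0:ℝ) ≤ ((n:ℝ)+1) := by positivity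
  have hr0 : ((((n:ℝ)+1) : ℝ):ℂ) ≠ 0 :=
    ofReal_ne_zero.mpr (by positivity : (0:ℝ) < (n:ℝ)+1).ne'
  rw [show (π * ((n:ℝ)+1)^2 : ℝ) = π * (((n:ℝ)+1)*((n:ℝ)+1)) by ring, ofReal_mul,
    Complex.mul_cpow_ofReal_nonneg Real.pi_pos.le (mul_nonneg hn hn), ofReal_mul,
    Complex.mul_cpow_ofReal_nonneg hn hn, ← cpow_add _ _ hr0, ← two_mul]
  norm_cast

end CompletedZetaAux

open CompletedZetaAux Set Real Complex HurwitzZeta in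
/-- Riemann's formula: for `s ≠ 0, 1`,
`π^{−s/2} Γ(s/2) ζ(s) = −1/s − 1/(1−s) + π^{−s/2} ∑_n n^{−s} Γ(s/2, πn²)
  + π^{(s−1)/2} ∑_n n^{s−1} Γ((1−s)/2, πn²)`,
where the left-hand side is the completed Riemann zeta function. -/
theorem completed_zeta_incomplete_gamma (s : ℂ) (hs0 : s ≠ 0) (hs1 : s ≠ 1) :
    completedRiemannZeta s =
      -1/s - 1/(1-s)
      + (Real.pi : ℂ) ^ (-s/2) *
          (∑' n : ℕ, ((n:ℂ)+1) ^ (-s) * incGamma (s/2) (Real.pi * ((n:ℝ)+1)^2))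
      + (Real.pi : ℂ) ^ ((s-1)/2) *
          (∑' n : ℕ, ((n:ℂ)+1) ^ (s-1) * incGamma ((1-s)/2) (Real.pi * ((n:ℝ)+1)^2)) := by
  have h0 : completedRiemannZeta₀ s = (hurwitzEvenFEPair 0).Λ₀ (s/2) / 2 := rfl
  rw [completedRiemannZeta_eq, h0, Lambda0_eq (s/2),
    show (1/2 : ℂ) - s/2 = (1-s)/2 by ring, I_eq (s/2), I_eq ((1-s)/2)]
  simp_rw [cpow_pi_mul_sq, show (2:ℂ) * -(s/2) = -s by ring,
    show (2:ℂ) * -((1-s)/2) = s-1 by ring, show -(s/2) = -s/2 by ring,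
    show -((1-s)/2) = (s-1)/2 by ring, mul_assoc]
  rw [tsum_mul_left, tsum_mul_left]
  ring
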